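/- Let S be a finite set of positive integers, let π be a permutation of S, and let Q = (q₁,…,q_m) be a sequence of cyclically adjacent swaps for π resulting in permutation σ. Fix k ∈ S, let Q' be the sequence obtained from Q by deleting all swaps involving element k, and let π' be any permutation corresponding to π restricted to S ∖ {k}. Then Q' is a valid sequence of cyclically adjacent swaps for π', and performing Q' on π' results in a permutation corresponding to σ restricted to S ∖ {k}. -/

import Mathlib

/-- The cyclic successor of `p` in the finite set `S`: the smallest element of `S`
greater than `p`, or `min S` if no such element exists. -/
def cycSucc (S : Finset ℕ) (p : ℕ) : ℕ :=
  if h : (S.filter (fun q => p < q)).Nonempty then (S.filter (fun q => p < q)).min' h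
  else if h' : S.Nonempty then S.min' h' else 0

/-- `π` is a permutation of the set `S`: it fixes every point outside `S`. -/
def IsPermOf (S : Finset ℕ) (π : Equiv.Perm ℕ) : Prop :=
  ∀ x, x ∉ S → π x = x

/-- Applying the swap `q = (i, j)` to `π`: elements `i` and `j` exchange positions
(element `i` moves clockwise, element `j` moves counterclockwise). -/
def applySwap (π : Equiv.Perm ℕ) (q : ℕ × ℕ) : Equiv.Perm ℕ :=
  π.trans (Equiv.swap (π q.1) (π q.2))

/-- `q = (i, j)` is a cyclically adjacent swap for the permutation `π` of `S`:
element `j` occupies the position that is the cyclic successor (in `S`) of the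
position of element `i`. -/
def IsCycSwap (S : Finset ℕ) (π : Equiv.Perm ℕ) (q : ℕ × ℕ) : Prop :=
  q.1 ∈ S ∧ q.2 ∈ S ∧ π q.2 = cycSucc S (π q.1)

/-- `Q` is a valid sequence of cyclically adjacent swaps for the permutation `π` of `S`. -/
def IsSwapSeq (S : Finset ℕ) : Equiv.Perm ℕ → List (ℕ × ℕ) → Prop
  | _, [] => True
  | π, q :: Q => IsCycSwap S π q ∧ IsSwapSeq S (applySwap π q) Q

/-- The permutation resulting from applying the swaps of `Q` in order to `π`. -/
def applySwaps (π : Equiv.Perm ℕ) (Q : List (ℕ × ℕ)) : Equiv.Perm ℕ :=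
  Q.foldl applySwap π

/-- `c(i,j)`: the number of times the swap `(i,j)` occurs in `Q` minus the number of
times the swap `(j,i)` occurs in `Q`. -/
def swapCount (Q : List (ℕ × ℕ)) (i j : ℕ) : ℤ :=
  (Q.count (i, j) : ℤ) - (Q.count (j, i) : ℤ)

/-- `d(i) = ∑_{j ≠ i} c(i,j)`: the net clockwise displacement of element `i ∈ S`. -/
def netDisp (S : Finset ℕ) (Q : List (ℕ × ℕ)) (i : ℕ) : ℤ :=
  ∑ j ∈ S.erase i, swapCount Q i j

/-- `i` is directly before `j` in the permutation `π` of `S`. -/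
def DirBefore (S : Finset ℕ) (π : Equiv.Perm ℕ) (i j : ℕ) : Prop :=
  (π i < π j ∧ ∀ ℓ ∈ S, ¬(π i < π ℓ ∧ π ℓ < π j)) ∨
    (S.max = (π i : WithBot ℕ) ∧ S.min = (π j : WithTop ℕ))

/-- `π'` is a permutation corresponding to `π` restricted to `S \ {k}`: it is a
permutation of `S.erase k` preserving the directly-before relationship, i.e.
`i ≺ j` in `π'` whenever `i ≺ j` in `π` or `i ≺ k ≺ j` in `π`. -/
def Corresponds (S : Finset ℕ) (k : ℕ) (π π' : Equiv.Perm ℕ) : Prop :=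
  IsPermOf (S.erase k) π' ∧
    ∀ i ∈ S.erase k, ∀ j ∈ S.erase k,
      (DirBefore S π i j ∨ (DirBefore S π i k ∧ DirBefore S π k j)) →
      DirBefore (S.erase k) π' i j

/-!
Encode a permutation `π` of `S` by its successor map `nextElem S π`, which sends each element
to the element directly after it, so that `i ≺ j` iff `nextElem S π i = j`. Then `π'`
corresponds to `π` restricted to `S \ {k}` iff the successor map of `π'` is that of `π` with `k`
bypassed (`skipSucc`). A cyclically adjacent swap `(a, b)` conjugates the successor map by the
transposition of `a` and `b`. If the swap avoids `k`, this conjugation commutes with bypassing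
`k`, so the swap is also cyclically adjacent for `π'` and performing it on both sides preserves
the correspondence. If the swap involves `k`, it moves `k` past its neighbour, which leaves the
bypassed successor map unchanged. Induction along `Q` finishes the proof.
-/

section SkipSucc

variable {α : Type*} [DecidableEq α]

def skipSucc (f : α → α) (k i : α) : α :=
  if f i = k then f k else f i

lemma skipSucc_eq_iff {f : α → α} {k i j : α} (hj : j ≠ k) :
    skipSucc f k i = j ↔ f i = j ∨ f i = k ∧ f k = j := by
  unfold skipSucc
  split_ifs with h <;> grind

lemma skipSucc_mem_erase {s : Finset α} {f : α → α} (hmaps : Set.MapsTo f s s)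
    (hinj : Set.InjOn f s) {k i : α} (hk : k ∈ s) (hi : i ∈ s.erase k) :
    skipSucc f k i ∈ s.erase k := by
  rw [Finset.mem_erase] at hi ⊢
  unfold skipSucc
  split_ifs with h
  · exact ⟨fun hkk => hi.1 (hinj hi.2 hk (h.trans hkk.symm)), hmaps hk⟩
  · exact ⟨h, hmaps hi.2⟩

lemma skipSucc_swap_conj {f : α → α} {a b k : α} (ha : a ≠ k) (hb : b ≠ k) :
    skipSucc (Equiv.swap a b ∘ f ∘ Equiv.swap a b) k =
      Equiv.swap a b ∘ skipSucc f k ∘ Equiv.swap a b := by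
  have hk : Equiv.swap a b k = k := Equiv.swap_apply_of_ne_of_ne ha.symm hb.symm
  funext i
  simp only [skipSucc, Function.comp_apply, hk, apply_ite (Equiv.swap a b),
    (Equiv.swap a b).injective.eq_iff' hk]

lemma skipSucc_swap_conj_of_adj {s : Set α} {f : α → α} (hinj : Set.InjOn f s) {a b k i : α}
    (ha : a ∈ s) (hb : b ∈ s) (hab : f a = b) (hk : a = k ∨ b = k) (hi : i ∈ s) (hik : i ≠ k) :
    skipSucc (Equiv.swap a b ∘ f ∘ Equiv.swap a b) k i = skipSucc f k i := by
  have := hinj.eq_iff hi ha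
  have := hinj.eq_iff hi hb
  have := hinj.eq_iff hb ha
  simp only [skipSucc, Function.comp_apply, Equiv.swap_apply_def]
  grind

end SkipSucc

section CycSucc

variable {S : Finset ℕ}

lemma cycSucc_mem (hS : S.Nonempty) (p : ℕ) : cycSucc S p ∈ S := by
  unfold cycSucc
  split_ifs with h
  · exact (Finset.mem_filter.1 (Finset.min'_mem _ h)).1
  · exact S.min'_mem hS

lemma cycSucc_eq_iff {p q : ℕ} (hp : p ∈ S) (hq : q ∈ S) :
    cycSucc S p = q ↔
      (p < q ∧ ∀ ℓ ∈ S, ¬(p < ℓ ∧ ℓ < q)) ∨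
        (S.max = (p : WithBot ℕ) ∧ S.min = (q : WithTop ℕ)) := by
  have hS : S.Nonempty := ⟨p, hp⟩
  unfold cycSucc
  split_ifs with h
  · obtain ⟨r, hr⟩ := h
    rw [Finset.mem_filter] at hr
    have hmax : S.max ≠ (p : WithBot ℕ) := fun hm =>
      (Finset.le_max hr.1).trans_eq hm |> WithBot.coe_le_coe.1 |>.not_gt hr.2
    simp only [Finset.min'_eq_iff, Finset.mem_filter, hmax, false_and, or_false]
    constructor
    · rintro ⟨⟨-, hpq⟩, hmin⟩
      exact ⟨hpq, fun ℓ hℓ ⟨hpℓ, hℓq⟩ => (hmin ℓ ⟨hℓ, hpℓ⟩).not_gt hℓq⟩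
    · rintro ⟨hpq, hbetween⟩
      exact ⟨⟨hq, hpq⟩, fun ℓ ⟨hℓ, hpℓ⟩ => not_lt.1 fun hℓq => hbetween ℓ hℓ ⟨hpℓ, hℓq⟩⟩
  · have hmax : S.max' hS = p :=
      (Finset.max'_eq_iff _ _ _).2 ⟨hp, fun r hr => not_lt.1 fun hpr => h ⟨r, by simp [hr, hpr]⟩⟩
    have hnot : ¬ p < q := fun hpq => h ⟨q, by simp [hq, hpq]⟩
    rw [← Finset.coe_max' hS, ← Finset.coe_min' hS, hmax]
    simp [hnot, Nat.cast_withBot]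

lemma cycSucc_injOn : Set.InjOn (cycSucc S) S := by
  intro p hp q hq hpq
  have hr := cycSucc_mem ⟨p, hp⟩ p
  have hpr := (cycSucc_eq_iff hp hr).1 rfl
  have hqr := (cycSucc_eq_iff hq hr).1 hpq.symm
  have hminr := fun (h : S.min = (cycSucc S p : WithTop ℕ)) (x : ℕ) (hx : x ∈ S) =>
    WithTop.coe_le_coe.1 (h ▸ Finset.min_le hx)
  rcases hpr with ⟨hp1, hp2⟩ | ⟨hp1, hp2⟩ <;> rcases hqr with ⟨hq1, hq2⟩ | ⟨hq1, hq2⟩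
  · by_contra hne
    rcases lt_or_gt_of_ne hne with h | h
    exacts [hp2 q hq ⟨h, hq1⟩, hq2 p hp ⟨h, hp1⟩]
  · exact absurd hp1 (hminr hq2 p hp).not_gt
  · exact absurd hq1 (hminr hp2 q hq).not_gt
  · exact WithBot.coe_inj.1 (hp1.symm.trans hq1)

end CycSucc

section Perm

variable {S : Finset ℕ} {π : Equiv.Perm ℕ}

lemma IsPermOf.apply_mem_iff (hπ : IsPermOf S π) {x : ℕ} : π x ∈ S ↔ x ∈ S := by
  refine ⟨fun h => ?_, fun h => ?_⟩
  · by_contra hx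
    exact hx (hπ x hx ▸ h)
  · by_contra hx
    exact hx (by rwa [π.injective (hπ (π x) hx)])

lemma IsPermOf.symm (hπ : IsPermOf S π) : IsPermOf S π.symm := fun x hx =>
  π.symm_apply_eq.2 (hπ x hx).symm

lemma IsPermOf.forall_mem_apply_iff (hπ : IsPermOf S π) {P : ℕ → Prop} :
    (∀ ℓ ∈ S, P (π ℓ)) ↔ ∀ ℓ ∈ S, P ℓ := by
  refine ⟨fun h ℓ hℓ => ?_, fun h ℓ hℓ => h _ (hπ.apply_mem_iff.2 hℓ)⟩
  simpa using h (π.symm ℓ) (hπ.symm.apply_mem_iff.2 hℓ)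

lemma applySwap_eq (π : Equiv.Perm ℕ) (a b : ℕ) :
    applySwap π (a, b) = (Equiv.swap a b).trans π := by
  ext x
  simp [applySwap, Equiv.swap_apply_apply]

lemma IsPermOf.applySwap {a b : ℕ} (hπ : IsPermOf S π) (ha : a ∈ S) (hb : b ∈ S) :
    IsPermOf S (applySwap π (a, b)) := fun x hx => by
  rw [applySwap_eq, Equiv.trans_apply,
    Equiv.swap_apply_of_ne_of_ne (by rintro rfl; exact hx ha) (by rintro rfl; exact hx hb), hπ x hx]

def nextElem (S : Finset ℕ) (π : Equiv.Perm ℕ) (i : ℕ) : ℕ :=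
  π.symm (cycSucc S (π i))

lemma nextElem_mapsTo (hπ : IsPermOf S π) : Set.MapsTo (nextElem S π) S S := fun i hi =>
  hπ.symm.apply_mem_iff.2 (cycSucc_mem ⟨i, hi⟩ _)

lemma nextElem_injOn (hπ : IsPermOf S π) : Set.InjOn (nextElem S π) S := fun _ hi _ hj h =>
  π.injective (cycSucc_injOn (hπ.apply_mem_iff.2 hi) (hπ.apply_mem_iff.2 hj) (π.symm.injective h))

lemma nextElem_applySwap (π : Equiv.Perm ℕ) (a b : ℕ) :
    nextElem S (applySwap π (a, b)) = Equiv.swap a b ∘ nextElem S π ∘ Equiv.swap a b := by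
  funext i
  simp [nextElem, applySwap_eq]

lemma dirBefore_iff (hπ : IsPermOf S π) {i j : ℕ} (hi : i ∈ S) (hj : j ∈ S) :
    DirBefore S π i j ↔ nextElem S π i = j := by
  rw [nextElem, Equiv.symm_apply_eq,
    cycSucc_eq_iff (hπ.apply_mem_iff.2 hi) (hπ.apply_mem_iff.2 hj), DirBefore,
    hπ.forall_mem_apply_iff (P := fun ℓ => ¬(π i < ℓ ∧ ℓ < π j))]

lemma isCycSwap_iff {a b : ℕ} :
    IsCycSwap S π (a, b) ↔ a ∈ S ∧ b ∈ S ∧ nextElem S π a = b := by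
  rw [IsCycSwap, nextElem, Equiv.symm_apply_eq, eq_comm]

end Perm

section Corresponds

variable {S : Finset ℕ} {k : ℕ} {π π' : Equiv.Perm ℕ}

lemma corresponds_iff (hπ : IsPermOf S π) (hk : k ∈ S) :
    Corresponds S k π π' ↔ IsPermOf (S.erase k) π' ∧
      ∀ i ∈ S.erase k, nextElem (S.erase k) π' i = skipSucc (nextElem S π) k i := by
  have hbefore : ∀ i ∈ S.erase k, ∀ j ∈ S.erase k,
      (DirBefore S π i j ∨ DirBefore S π i k ∧ DirBefore S π k j) ↔
        skipSucc (nextElem S π) k i = j := fun i hi j hj => by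
    have hiS := Finset.mem_of_mem_erase hi
    have hjS := Finset.mem_of_mem_erase hj
    rw [skipSucc_eq_iff (Finset.ne_of_mem_erase hj), dirBefore_iff hπ hiS hk,
      dirBefore_iff hπ hk hjS, dirBefore_iff hπ hiS hjS]
  refine and_congr_right fun hπ' => ⟨fun h i hi => ?_, fun h i hi j hj hij => ?_⟩
  · have hmem := skipSucc_mem_erase (nextElem_mapsTo hπ) (nextElem_injOn hπ) hk hi
    exact (dirBefore_iff hπ' hi hmem).1 (h i hi _ hmem ((hbefore i hi _ hmem).2 rfl))
  · rw [dirBefore_iff hπ' hi hj, h i hi, ← hbefore i hi j hj]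
    exact hij

lemma Corresponds.applySwap_of_ne (hπ : IsPermOf S π) (hk : k ∈ S)
    (hcorr : Corresponds S k π π') {a b : ℕ} (hswap : IsCycSwap S π (a, b))
    (ha : a ≠ k) (hb : b ≠ k) :
    IsCycSwap (S.erase k) π' (a, b) ∧
      Corresponds S k (applySwap π (a, b)) (applySwap π' (a, b)) := by
  obtain ⟨haS, hbS, hab⟩ := isCycSwap_iff.1 hswap
  obtain ⟨hπ', hnext⟩ := (corresponds_iff hπ hk).1 hcorr
  have haS' : a ∈ S.erase k := Finset.mem_erase.2 ⟨ha, haS⟩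
  have hbS' : b ∈ S.erase k := Finset.mem_erase.2 ⟨hb, hbS⟩
  refine ⟨isCycSwap_iff.2 ⟨haS', hbS', ?_⟩, (corresponds_iff (hπ.applySwap haS hbS) hk).2
    ⟨hπ'.applySwap haS' hbS', fun i hi => ?_⟩⟩
  · rw [hnext a haS', skipSucc, if_neg (hab ▸ hb), hab]
  · have hswap_mem : Equiv.swap a b i ∈ S.erase k := by
      rw [Equiv.swap_apply_def]
      split_ifs <;> assumption
    rw [nextElem_applySwap, nextElem_applySwap, skipSucc_swap_conj ha hb]
    simp only [Function.comp_apply, hnext _ hswap_mem]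

lemma Corresponds.applySwap_of_eq (hπ : IsPermOf S π) (hk : k ∈ S)
    (hcorr : Corresponds S k π π') {a b : ℕ} (hswap : IsCycSwap S π (a, b))
    (hab : a = k ∨ b = k) :
    Corresponds S k (applySwap π (a, b)) π' := by
  obtain ⟨haS, hbS, hnext_ab⟩ := isCycSwap_iff.1 hswap
  obtain ⟨hπ', hnext⟩ := (corresponds_iff hπ hk).1 hcorr
  refine (corresponds_iff (hπ.applySwap haS hbS) hk).2 ⟨hπ', fun i hi => ?_⟩
  rw [nextElem_applySwap, hnext i hi, skipSucc_swap_conj_of_adj (nextElem_injOn hπ) haS hbS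
    hnext_ab hab (Finset.mem_of_mem_erase hi) (Finset.ne_of_mem_erase hi)]

end Corresponds

lemma Corresponds.applySwaps_filter {S : Finset ℕ} {k : ℕ} (hk : k ∈ S) (Q : List (ℕ × ℕ)) :
    ∀ {π π' : Equiv.Perm ℕ}, IsPermOf S π → IsSwapSeq S π Q → Corresponds S k π π' →
      IsSwapSeq (S.erase k) π' (Q.filter fun q => decide (q.1 ≠ k ∧ q.2 ≠ k)) ∧
        Corresponds S k (applySwaps π Q)
          (applySwaps π' (Q.filter fun q => decide (q.1 ≠ k ∧ q.2 ≠ k))) := by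
  induction Q with
  | nil => exact fun _ _ hcorr => ⟨trivial, hcorr⟩
  | cons q Q ih =>
    intro π π' hπ hQ hcorr
    obtain ⟨a, b⟩ := q
    obtain ⟨hswap, hQ⟩ := hQ
    have hπ₁ := hπ.applySwap (isCycSwap_iff.1 hswap).1 (isCycSwap_iff.1 hswap).2.1
    by_cases hab : a ≠ k ∧ b ≠ k
    · obtain ⟨hswap', hcorr₁⟩ := hcorr.applySwap_of_ne hπ hk hswap hab.1 hab.2
      simpa [List.filter_cons, hab, IsSwapSeq, applySwaps, hswap'] using ih hπ₁ hQ hcorr₁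
    · have hcorr₁ := hcorr.applySwap_of_eq hπ hk hswap (by tauto)
      simpa [List.filter_cons, hab, applySwaps] using ih hπ₁ hQ hcorr₁

theorem restrict_swap_seq_general (S : Finset ℕ)
    (π : Equiv.Perm ℕ) (hπ : IsPermOf S π)
    (Q : List (ℕ × ℕ)) (hQ : IsSwapSeq S π Q)
    (σ : Equiv.Perm ℕ) (hσ : applySwaps π Q = σ)
    (k : ℕ) (hk : k ∈ S)
    (π' : Equiv.Perm ℕ) (hπ' : Corresponds S k π π') :
    IsSwapSeq (S.erase k) π' (Q.filter fun q => decide (q.1 ≠ k ∧ q.2 ≠ k)) ∧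
      Corresponds S k σ
        (applySwaps π' (Q.filter fun q => decide (q.1 ≠ k ∧ q.2 ≠ k))) :=
  hσ ▸ hπ'.applySwaps_filter hk Q hπ hQ

/-- Deleting from a sequence of cyclically adjacent swaps all swaps involving a fixed
element `k` gives a valid sequence of cyclically adjacent swaps for any permutation
`π'` corresponding to `π` restricted to `S \ {k}`, and performing it on `π'` results
in a permutation corresponding to the final permutation `σ` restricted to `S \ {k}`. -/
theorem restrict_swap_seq (S : Finset ℕ) (hpos : ∀ x ∈ S, 0 < x)
    (π : Equiv.Perm ℕ) (hπ : IsPermOf S π)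
    (Q : List (ℕ × ℕ)) (hQ : IsSwapSeq S π Q)
    (σ : Equiv.Perm ℕ) (hσ : applySwaps π Q = σ)
    (k : ℕ) (hk : k ∈ S)
    (π' : Equiv.Perm ℕ) (hπ' : Corresponds S k π π') :
    IsSwapSeq (S.erase k) π' (Q.filter fun q => decide (q.1 ≠ k ∧ q.2 ≠ k)) ∧
      Corresponds S k σ
        (applySwaps π' (Q.filter fun q => decide (q.1 ≠ k ∧ q.2 ≠ k))) :=
  restrict_swap_seq_general S π hπ Q hQ σ hσ k hk π' hπ'
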